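/- arXiv:2311.14264 — 3 statements merged into one kernel-verified Lean document; each statement's English description precedes it below -/
import Mathlib

section
/- Let β_max ∈ (π, 2π] and let β ∈ [0, 2π). Then sin β ≥ cos(β_max/2) if and only if (0 ≤ β ≤ π/2 + β_max/2 or 5π/2 − β_max/2 ≤ β < 2π). -/
private lemma sin_mono_aux {x y : ℝ} (hx : -(Real.pi/2) ≤ x) (hy : y ≤ Real.pi/2)
    (hxy : x ≤ y) : Real.sin x ≤ Real.sin y :=
  Real.strictMonoOn_sin.monotoneOn ⟨hx, hxy.trans hy⟩ ⟨hx.trans hxy, hy⟩ hxy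

private lemma sin_smono_aux {x y : ℝ} (hx : -(Real.pi/2) ≤ x) (hy : y ≤ Real.pi/2)
    (hxy : x < y) : Real.sin x < Real.sin y :=
  Real.strictMonoOn_sin ⟨hx, hxy.le.trans hy⟩ ⟨hx.trans hxy.le, hy⟩ hxy

/-- For `β_max ∈ (π, 2π]` and `β ∈ [0, 2π)`:
`sin β ≥ cos(β_max/2)` iff `0 ≤ β ≤ π/2 + β_max/2` or `5π/2 − β_max/2 ≤ β < 2π`. -/
theorem angle_constraint_iff_of_gt_pi (βmax β : ℝ)
    (hβmaxπ : Real.pi < βmax) (hβmax₂π : βmax ≤ 2 * Real.pi)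
    (hβ₀ : 0 ≤ β) (hβ₂π : β < 2 * Real.pi) :
    Real.cos (βmax / 2) ≤ Real.sin β ↔
      ((0 ≤ β ∧ β ≤ Real.pi / 2 + βmax / 2) ∨
        (5 * Real.pi / 2 - βmax / 2 ≤ β ∧ β < 2 * Real.pi)) := by
  have hπ := Real.pi_pos
  set c := βmax / 2 with hc
  have hc1 : Real.pi / 2 < c := by rw [hc]; linarith
  have hc2 : c ≤ Real.pi := by rw [hc]; linarith
  have hsc : Real.sin (c - Real.pi / 2) = -Real.cos c := by
    have := Real.sin_pi_div_two_sub c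
    have h2 : Real.sin (c - Real.pi / 2) = -Real.sin (Real.pi / 2 - c) := by
      rw [← Real.sin_neg]; ring_nf
    rw [h2, this]
  have hsinβ : Real.sin (β - Real.pi) = -Real.sin β := Real.sin_sub_pi β
  constructor
  · intro h
    by_contra hcon
    push_neg at hcon
    obtain ⟨h1, h2⟩ := hcon
    have hb1 : Real.pi / 2 + c < β := h1 hβ₀
    have hb2 : β < 5 * Real.pi / 2 - c := by
      by_contra hx
      push_neg at hx
      exact absurd hβ₂π (not_lt.mpr (h2 hx))
    -- show sin (β - π) > sin (c - π/2) = -cos c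
    have key : Real.sin (c - Real.pi / 2) < Real.sin (β - Real.pi) := by
      rcases le_or_gt (β - Real.pi) (Real.pi / 2) with hle | hlt
      · exact sin_smono_aux (by linarith) hle (by linarith)
      · have := Real.sin_pi_sub (β - Real.pi)
        have hrw : Real.pi - (β - Real.pi) = 2 * Real.pi - β := by ring
        rw [← this, hrw]
        exact sin_smono_aux (by linarith) (by linarith) (by linarith)
    rw [hsc, hsinβ] at key
    linarith
  · rintro (⟨_, hb⟩ | ⟨hb, _⟩)
    · rcases le_or_gt β Real.pi with hle | hlt
      · have h1 : 0 ≤ Real.sin β := Real.sin_nonneg_of_nonneg_of_le_pi hβ₀ hle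
        have h2 : Real.cos c ≤ 0 := Real.cos_nonpos_of_pi_div_two_le_of_le hc1.le (by linarith)
        linarith
      · have key : Real.sin (β - Real.pi) ≤ Real.sin (c - Real.pi / 2) :=
          sin_mono_aux (by linarith) (by linarith) (by linarith)
        rw [hsc, hsinβ] at key
        linarith
    · have key : Real.sin (β - Real.pi) ≤ Real.sin (c - Real.pi / 2) := by
        have := Real.sin_pi_sub (β - Real.pi)
        have hrw : Real.pi - (β - Real.pi) = 2 * Real.pi - β := by ring
        rw [← this, hrw]
        exact sin_mono_aux (by linarith) (by linarith) (by linarith)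
      rw [hsc, hsinβ] at key
      linarith
end

section
/- Let N ≥ 2 and ρ > 0. Let U be an N×N real orthogonal matrix, V a 2×2 real orthogonal matrix, and σ₁ ≥ σ₂ ≥ 0. Let S ∈ ℝᴺˣ² be the matrix with S₁₁ = σ₁, S₂₂ = σ₂ and all other entries zero, and set J = U S V. For i = 1, 2 let λᵢ = (σᵢ + √(σᵢ² + 8ρ))/(2ρ), let Λ ∈ ℝᴺˣ² have Λ₁₁ = λ₁, Λ₂₂ = λ₂ and all other entries zero, and set X* = U Λ V. Then X*ᵀ X* is invertible, and for every X ∈ ℝᴺˣ² such that Xᵀ X is invertible, ln det((X*ᵀ X*)⁻¹) + (ρ/2) Tr(X*ᵀ X*) − Tr(Jᵀ X*) ≤ ln det((Xᵀ X)⁻¹) + (ρ/2) Tr(Xᵀ X) − Tr(Jᵀ X). That is, X* is a global minimizer of the ADMM X-subproblem objective. -/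
/-!
Writing `X = U Y V` leaves the objective unchanged and replaces `J` by the rectangular diagonal
`S`. If the columns of `Y` have norms `t₁, t₂`, then `det (YᵀY) ≤ t₁² t₂²` and
`tr (SᵀY) ≤ σ₁ t₁ + σ₂ t₂`, so the objective is at least `h₁ t₁ + h₂ t₂` with
`hᵢ t = -2 log t + (ρ/2) t² - σᵢ t`. Each `hᵢ` is minimized on `t > 0` at `λᵢ`, and `X*`
attains `h₁ λ₁ + h₂ λ₂`.
-/

open Matrix

namespace XUpdate

open Real

section Scalar

noncomputable def scalarObjective (ρ σ t : ℝ) : ℝ := -2 * log t + ρ / 2 * t ^ 2 - σ * t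

/-- The positive root of `ρ t² - σ t - 2`, i.e. the critical point of `scalarObjective ρ σ`
on `t > 0`. -/
noncomputable def scalarMinimizer (ρ σ : ℝ) : ℝ := (σ + √(σ ^ 2 + 8 * ρ)) / (2 * ρ)

variable {ρ σ : ℝ}

lemma scalarMinimizer_pos (hρ : 0 < ρ) : 0 < scalarMinimizer ρ σ := by
  have habs : |σ| < √(σ ^ 2 + 8 * ρ) := by
    rw [← sqrt_sq_eq_abs]
    exact sqrt_lt_sqrt (sq_nonneg σ) (by linarith)
  exact div_pos (by linarith [neg_abs_le σ]) (by positivity)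

lemma scalarMinimizer_sq (hρ : 0 < ρ) :
    ρ * scalarMinimizer ρ σ ^ 2 = σ * scalarMinimizer ρ σ + 2 := by
  have hsq : √(σ ^ 2 + 8 * ρ) ^ 2 = σ ^ 2 + 8 * ρ := sq_sqrt (by positivity)
  unfold scalarMinimizer
  generalize √(σ ^ 2 + 8 * ρ) = s at hsq ⊢
  field_simp
  linear_combination hsq

lemma scalarObjective_scalarMinimizer_le (hρ : 0 < ρ) {t : ℝ} (ht : 0 < t) :
    scalarObjective ρ σ (scalarMinimizer ρ σ) ≤ scalarObjective ρ σ t := by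
  set r := scalarMinimizer ρ σ
  have hr : 0 < r := scalarMinimizer_pos hρ
  have hlog : log (t / r) ≤ t / r - 1 := log_le_sub_one_of_pos (div_pos ht hr)
  rw [log_div ht.ne' hr.ne'] at hlog
  have hslope : 2 * (t / r - 1) = (t - r) * (ρ * r - σ) := by
    have := scalarMinimizer_sq (σ := σ) hρ
    field_simp
    linear_combination (r - t) * this
  -- with `r` the critical point, `h t - h r = ρ/2 (t - r)² + 2 (t/r - 1 - log (t/r))`
  unfold scalarObjective
  nlinarith [mul_nonneg hρ.le (sq_nonneg (t - r))]

end Scalar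

section Conjugation

variable {R : Type*} {m n : Type*} [Fintype m] [Fintype n]

lemma transpose_mul_conj [CommSemiring R] [DecidableEq m] {U : Matrix m m R} (hU : Uᵀ * U = 1)
    (V : Matrix n n R) (Y Z : Matrix m n R) :
    (U * Y * V)ᵀ * (U * Z * V) = Vᵀ * (Yᵀ * Z) * V := by
  simp only [transpose_mul, Matrix.mul_assoc]
  rw [← Matrix.mul_assoc Uᵀ, hU, Matrix.one_mul]

variable [DecidableEq n]

lemma det_conj [CommRing R] {V : Matrix n n R} (hV : Vᵀ * V = 1) (A : Matrix n n R) :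
    (Vᵀ * A * V).det = A.det := by
  rw [det_mul, det_mul, mul_comm _ A.det, mul_assoc, ← det_mul, hV, det_one, mul_one]

lemma trace_conj [CommRing R] {V : Matrix n n R} (hV : Vᵀ * V = 1) (A : Matrix n n R) :
    (Vᵀ * A * V).trace = A.trace := by
  rw [trace_mul_comm, ← Matrix.mul_assoc, mul_eq_one_comm.mp hV, Matrix.one_mul]

lemma log_det_inv (A : Matrix n n ℝ) : log A⁻¹.det = -log A.det := by
  rw [det_nonsing_inv, Ring.inverse_eq_inv', log_inv]

noncomputable def objective (ρ : ℝ) (J X : Matrix m n ℝ) : ℝ :=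
  log ((Xᵀ * X)⁻¹).det + ρ / 2 * (Xᵀ * X).trace - (Jᵀ * X).trace

lemma objective_conj [DecidableEq m] {U : Matrix m m ℝ} (hU : Uᵀ * U = 1) {V : Matrix n n ℝ} (hV : Vᵀ * V = 1)
    (ρ : ℝ) (J Y : Matrix m n ℝ) :
    objective ρ (U * J * V) (U * Y * V) = objective ρ J Y := by
  simp only [objective, log_det_inv, transpose_mul_conj hU, det_conj hV, trace_conj hV]

end Conjugation

section RectDiag

variable {R : Type*} [Semiring R] {m n : ℕ}

def rectDiag (d : Fin n → R) : Matrix (Fin m) (Fin n) R :=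
  Matrix.of fun i j => if (i : ℕ) = (j : ℕ) then d j else 0

lemma rectDiag_transpose_mul_rectDiag (h : n ≤ m) (d e : Fin n → R) :
    (rectDiag (m := m) d)ᵀ * rectDiag (m := m) e = diagonal fun j => d j * e j := by
  ext j k
  rw [mul_apply, Finset.sum_eq_single (Fin.castLE h j)]
  · by_cases hjk : j = k
    · subst hjk
      simp [rectDiag]
    · simp [rectDiag, hjk, Fin.val_ne_of_ne hjk]
  · intro i _ hi
    have : (i : ℕ) ≠ j := fun hij => hi (Fin.ext hij)
    simp [rectDiag, this]
  · simp

lemma trace_rectDiag_transpose_mul (h : n ≤ m) (d : Fin n → R) (Y : Matrix (Fin m) (Fin n) R) :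
    ((rectDiag (m := m) d)ᵀ * Y).trace = ∑ j, d j * Y (Fin.castLE h j) j := by
  refine Finset.sum_congr rfl fun j _ => ?_
  rw [diag_apply, mul_apply, Finset.sum_eq_single (Fin.castLE h j)]
  · simp [rectDiag]
  · intro i _ hi
    have : (i : ℕ) ≠ j := fun hij => hi (Fin.ext hij)
    simp [rectDiag, this]
  · simp

end RectDiag

lemma objective_rectDiag {m n : ℕ} (h : n ≤ m) (ρ : ℝ) (σ lam : Fin n → ℝ)
    (hlam : ∀ j, 0 < lam j) :
    objective ρ (rectDiag (m := m) σ) (rectDiag (m := m) lam) =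
      ∑ j, scalarObjective ρ (σ j) (lam j) := by
  have hlog : log (∏ j, lam j * lam j) = ∑ j, 2 * log (lam j) := by
    rw [log_prod fun j _ => (mul_pos (hlam j) (hlam j)).ne']
    exact Finset.sum_congr rfl fun j _ => by rw [log_mul (hlam j).ne' (hlam j).ne']; ring
  rw [objective, log_det_inv, rectDiag_transpose_mul_rectDiag h, det_diagonal, hlog,
    trace_diagonal, trace_rectDiag_transpose_mul h, Finset.mul_sum, ← Finset.sum_neg_distrib,
    ← Finset.sum_add_distrib, ← Finset.sum_sub_distrib]
  refine Finset.sum_congr rfl fun j _ => ?_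
  simp only [scalarObjective, rectDiag, of_apply, Fin.val_castLE, if_true]
  ring

section ColNorm

variable {m n : Type*} [Fintype m]

noncomputable def colNorm (Y : Matrix m n ℝ) (j : n) : ℝ := √(∑ i, Y i j ^ 2)

lemma le_colNorm (Y : Matrix m n ℝ) (i : m) (j : n) : Y i j ≤ colNorm Y j :=
  (le_abs_self _).trans <|
    abs_le_sqrt (Finset.single_le_sum (fun k _ => sq_nonneg (Y k j)) (Finset.mem_univ i))

lemma colNorm_sq (Y : Matrix m n ℝ) (j : n) : colNorm Y j ^ 2 = (Yᵀ * Y) j j := by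
  rw [colNorm, sq_sqrt (Finset.sum_nonneg fun i _ => sq_nonneg _), mul_apply]
  simp only [transpose_apply, sq]

variable [Fintype n]

lemma trace_transpose_mul_self (Y : Matrix m n ℝ) :
    (Yᵀ * Y).trace = ∑ j, colNorm Y j ^ 2 := by
  simp only [colNorm_sq, trace, diag_apply]

variable [DecidableEq n]

lemma colNorm_pos {Y : Matrix m n ℝ} (hY : IsUnit (Yᵀ * Y)) (j : n) : 0 < colNorm Y j := by
  refine (sqrt_nonneg _).lt_of_ne' fun h0 => ?_
  have hcol : ∀ i, Y i j = 0 := by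
    have hsum := (Finset.sum_eq_zero_iff_of_nonneg fun i _ => sq_nonneg (Y i j)).mp
      ((sqrt_eq_zero'.mp h0).antisymm (Finset.sum_nonneg fun i _ => sq_nonneg _))
    exact fun i => pow_eq_zero_iff two_ne_zero |>.mp (hsum i (Finset.mem_univ i))
  refine ((isUnit_iff_isUnit_det _).mp hY).ne_zero (det_eq_zero_of_row_eq_zero j fun k => ?_)
  simp [mul_apply, hcol]

end ColNorm

lemma det_transpose_mul_self_le {m : Type*} [Fintype m] (Y : Matrix m (Fin 2) ℝ) :
    (Yᵀ * Y).det ≤ colNorm Y 0 ^ 2 * colNorm Y 1 ^ 2 := by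
  have hsymm : (Yᵀ * Y) 1 0 = (Yᵀ * Y) 0 1 := by simp only [mul_apply, transpose_apply, mul_comm]
  rw [det_fin_two, colNorm_sq, colNorm_sq, hsymm]
  nlinarith [sq_nonneg ((Yᵀ * Y) 0 1)]

lemma sum_scalarObjective_colNorm_le_objective {m : ℕ} (h : 2 ≤ m) (ρ : ℝ) {σ : Fin 2 → ℝ}
    (hσ : ∀ j, 0 ≤ σ j) {Y : Matrix (Fin m) (Fin 2) ℝ} (hY : IsUnit (Yᵀ * Y)) :
    ∑ j, scalarObjective ρ (σ j) (colNorm Y j) ≤ objective ρ (rectDiag σ) Y := by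
  have hc0 := colNorm_pos hY 0
  have hc1 := colNorm_pos hY 1
  have hdet : 0 < (Yᵀ * Y).det := by
    refine (posSemidef_conjTranspose_mul_self Y).det_nonneg.lt_of_ne' ?_
    exact ((isUnit_iff_isUnit_det _).mp hY).ne_zero
  have hlog : log (Yᵀ * Y).det ≤ 2 * log (colNorm Y 0) + 2 * log (colNorm Y 1) :=
    calc log (Yᵀ * Y).det ≤ log (colNorm Y 0 ^ 2 * colNorm Y 1 ^ 2) :=
          log_le_log hdet (det_transpose_mul_self_le Y)
      _ = 2 * log (colNorm Y 0) + 2 * log (colNorm Y 1) := by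
          rw [log_mul (by positivity) (by positivity), log_pow, log_pow]
          push_cast
          ring
  have hentry (j : Fin 2) : σ j * Y (Fin.castLE h j) j ≤ σ j * colNorm Y j :=
    mul_le_mul_of_nonneg_left (le_colNorm Y _ j) (hσ j)
  rw [objective, log_det_inv, trace_transpose_mul_self, trace_rectDiag_transpose_mul h]
  simp only [Fin.sum_univ_two, scalarObjective]
  linarith [hentry 0, hentry 1]

end XUpdate

/-- Closed-form global minimizer of the ADMM `X`-subproblem: with
`J = U S V` an SVD (`S` the `N×2` "diagonal" matrix of singular values
`σ₁ ≥ σ₂ ≥ 0`), the matrix `X* = U Λ V` with `λᵢ = (σᵢ + √(σᵢ² + 8ρ))/(2ρ)`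
has `X*ᵀX*` invertible and globally minimizes
`ln det((XᵀX)⁻¹) + (ρ/2) Tr(XᵀX) − Tr(JᵀX)` over all `X` with `XᵀX` invertible. -/
theorem admm_X_update_global_min {N : ℕ} (hN : 2 ≤ N) (ρ : ℝ) (hρ : 0 < ρ)
    (U : Matrix (Fin N) (Fin N) ℝ) (hU : Uᵀ * U = 1)
    (V : Matrix (Fin 2) (Fin 2) ℝ) (hV : Vᵀ * V = 1)
    (σ1 σ2 : ℝ) (hσ : σ1 ≥ σ2) (hσ2 : 0 ≤ σ2) :
    let S : Matrix (Fin N) (Fin 2) ℝ :=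
      Matrix.of fun i j => if (i : ℕ) = (j : ℕ) then ![σ1, σ2] j else 0
    let J : Matrix (Fin N) (Fin 2) ℝ := U * S * V
    let lam : Fin 2 → ℝ :=
      fun i => ((![σ1, σ2] i) + Real.sqrt ((![σ1, σ2] i) ^ 2 + 8 * ρ)) / (2 * ρ)
    let Λ : Matrix (Fin N) (Fin 2) ℝ :=
      Matrix.of fun i j => if (i : ℕ) = (j : ℕ) then lam j else 0
    let Xstar : Matrix (Fin N) (Fin 2) ℝ := U * Λ * V
    IsUnit (Xstarᵀ * Xstar) ∧
    ∀ X : Matrix (Fin N) (Fin 2) ℝ, IsUnit (Xᵀ * X) →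
      Real.log ((Xstarᵀ * Xstar)⁻¹).det + ρ / 2 * (Xstarᵀ * Xstar).trace -
          (Jᵀ * Xstar).trace ≤
        Real.log ((Xᵀ * X)⁻¹).det + ρ / 2 * (Xᵀ * X).trace - (Jᵀ * X).trace := by
  intro S J lam Λ Xstar
  have hσ_nonneg : ∀ j : Fin 2, 0 ≤ ![σ1, σ2] j := by simp [Fin.forall_fin_two, hσ2, hσ2.trans hσ]
  have hlam (j : Fin 2) : 0 < lam j := XUpdate.scalarMinimizer_pos hρ
  have hΛ : Λᵀ * Λ = diagonal fun j => lam j * lam j :=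
    XUpdate.rectDiag_transpose_mul_rectDiag hN lam lam
  refine ⟨?_, fun X hX => ?_⟩
  · rw [isUnit_iff_isUnit_det, XUpdate.transpose_mul_conj hU, XUpdate.det_conj hV, hΛ,
      det_diagonal]
    exact (Finset.prod_pos fun j _ => mul_pos (hlam j) (hlam j)).ne'.isUnit
  set Y := Uᵀ * X * Vᵀ
  have hXY : X = U * Y * V := by
    simp only [Y, ← Matrix.mul_assoc, mul_eq_one_comm.mp hU, Matrix.one_mul]
    rw [Matrix.mul_assoc, hV, Matrix.mul_one]
  have hY : IsUnit (Yᵀ * Y) := by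
    rwa [isUnit_iff_isUnit_det, ← XUpdate.det_conj hV, ← XUpdate.transpose_mul_conj hU, ← hXY,
      ← isUnit_iff_isUnit_det]
  change XUpdate.objective ρ J Xstar ≤ XUpdate.objective ρ J X
  calc XUpdate.objective ρ J Xstar = ∑ j, XUpdate.scalarObjective ρ (![σ1, σ2] j) (lam j) :=
        (XUpdate.objective_conj hU hV ρ S Λ).trans (XUpdate.objective_rectDiag hN ρ _ lam hlam)
    _ ≤ ∑ j, XUpdate.scalarObjective ρ (![σ1, σ2] j) (XUpdate.colNorm Y j) :=
        Finset.sum_le_sum fun j _ =>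
          XUpdate.scalarObjective_scalarMinimizer_le hρ (XUpdate.colNorm_pos hY j)
    _ ≤ XUpdate.objective ρ S Y :=
        XUpdate.sum_scalarObjective_colNorm_le_objective hN ρ hσ_nonneg hY
    _ = XUpdate.objective ρ J X := by rw [hXY, XUpdate.objective_conj hU hV]
end

section
/- Let N be a positive integer, ρ > 0, let M be an N×N real symmetric matrix, λ ∈ ℝ such that M̃ := M − λ·I is negative semidefinite, and let C ∈ ℝᴺˣ². Define L(G) = (ρ/2) Tr(Gᵀ M G) + Tr(Cᵀ G) for G ∈ ℝᴺˣ². Suppose G′, G″ ∈ ℝᴺˣ² satisfy Tr(G″ᵀ G″) = Tr(G′ᵀ G′) and Tr(Qᵀ G″) ≤ Tr(Qᵀ G′), where Q = C + ρ M̃ G′. Then L(G″) ≤ L(G′). -/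
/-!
Write `M̃ = M - λ•1`. Then `Tr(GᵀMG) = Tr(GᵀM̃G) + λ Tr(GᵀG)`, and the second term takes the same
value at `G'` and `G''`. The remaining part `f(G) = (ρ/2) Tr(GᵀM̃G) + Tr(CᵀG)` is a concave
quadratic because `M̃ ⪯ 0`, so it lies below its tangent plane at `G'`, whose slope is
`Q = C + ρ M̃ G'`: `f(G'') ≤ f(G') + Tr(Qᵀ(G'' - G'))`, and the last term is `≤ 0` by hypothesis.
-/

open Matrix

namespace Matrix

lemma PosSemidef.isSymm_of_neg {n : Type*} {A : Matrix n n ℝ} (hA : (-A).PosSemidef) :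
    A.IsSymm := by
  simpa using (isHermitian_iff_isSymm.mp hA.isHermitian).neg

variable {m n R : Type*} [Fintype m] [Fintype n]

section CommRing

variable [CommRing R]

lemma trace_transpose_mul_mul_comm_of_isSymm {A : Matrix n n R} (hA : A.IsSymm)
    (X Y : Matrix n m R) : (Xᵀ * A * Y).trace = (Yᵀ * A * X).trace := by
  rw [← trace_transpose, transpose_mul, transpose_mul, transpose_transpose, hA.eq,
    Matrix.mul_assoc]

lemma trace_transpose_mul_sub_mul_sub_of_isSymm {A : Matrix n n R} (hA : A.IsSymm)
    (X Y : Matrix n m R) :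
    ((Y - X)ᵀ * A * (Y - X)).trace =
      (Yᵀ * A * Y).trace - 2 * (Xᵀ * A * Y).trace + (Xᵀ * A * X).trace := by
  simp only [transpose_sub, Matrix.sub_mul, Matrix.mul_sub, trace_sub]
  rw [trace_transpose_mul_mul_comm_of_isSymm hA Y X]
  ring

lemma trace_transpose_mul_add_smul_mul_of_isSymm {A : Matrix n n R} (hA : A.IsSymm)
    (C X Y : Matrix n m R) (ρ : R) :
    ((C + ρ • (A * X))ᵀ * Y).trace = (Cᵀ * Y).trace + ρ * (Xᵀ * A * Y).trace := by
  rw [transpose_add, transpose_smul, transpose_mul, hA.eq, Matrix.add_mul, Matrix.smul_mul,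
    trace_add, trace_smul, smul_eq_mul]

variable [DecidableEq n]

lemma trace_transpose_mul_mul_eq_sub_smul_one (M : Matrix n n R) (lam : R)
    (X : Matrix n m R) :
    (Xᵀ * M * X).trace = (Xᵀ * (M - lam • 1) * X).trace + lam * (Xᵀ * X).trace := by
  rw [Matrix.mul_sub, Matrix.sub_mul, Matrix.mul_smul, Matrix.smul_mul, Matrix.mul_one,
    trace_sub, trace_smul, smul_eq_mul]
  ring

end CommRing

lemma trace_transpose_mul_mul_le_of_posSemidef_neg {A : Matrix n n ℝ} (hA : (-A).PosSemidef)
    (X Y : Matrix n m ℝ) :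
    (Yᵀ * A * Y).trace ≤ 2 * (Xᵀ * A * Y).trace - (Xᵀ * A * X).trace := by
  have hgap : 0 ≤ ((Y - X)ᵀ * (-A) * (Y - X)).trace := by
    simpa [conjTranspose_eq_transpose_of_trivial] using
      (hA.conjTranspose_mul_mul_same (Y - X)).trace_nonneg
  rw [Matrix.mul_neg, Matrix.neg_mul, trace_neg,
    trace_transpose_mul_sub_mul_sub_of_isSymm hA.isSymm_of_neg] at hgap
  linarith

end Matrix

theorem mm_descent_general {N : ℕ} (ρ : ℝ) (hρ : 0 < ρ)
    (M : Matrix (Fin N) (Fin N) ℝ) (lam : ℝ)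
    (hNeg : (-(M - lam • (1 : Matrix (Fin N) (Fin N) ℝ))).PosSemidef)
    (C : Matrix (Fin N) (Fin 2) ℝ)
    (G' G'' : Matrix (Fin N) (Fin 2) ℝ)
    (hnorm : (G''ᵀ * G'').trace = (G'ᵀ * G').trace)
    (hlin : (((C + ρ • ((M - lam • (1 : Matrix (Fin N) (Fin N) ℝ)) * G'))ᵀ)
        * G'').trace ≤
      (((C + ρ • ((M - lam • (1 : Matrix (Fin N) (Fin N) ℝ)) * G'))ᵀ)
        * G').trace) :
    ρ / 2 * (G''ᵀ * M * G'').trace + (Cᵀ * G'').trace ≤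
      ρ / 2 * (G'ᵀ * M * G').trace + (Cᵀ * G').trace := by
  have hsymm := hNeg.isSymm_of_neg
  rw [trace_transpose_mul_add_smul_mul_of_isSymm hsymm,
    trace_transpose_mul_add_smul_mul_of_isSymm hsymm] at hlin
  have htangent := mul_le_mul_of_nonneg_left
    (trace_transpose_mul_mul_le_of_posSemidef_neg hNeg G' G'') (half_pos hρ).le
  rw [trace_transpose_mul_mul_eq_sub_smul_one M lam G',
    trace_transpose_mul_mul_eq_sub_smul_one M lam G'', hnorm]
  linarith

/-- Descent property of one MM iteration in the `G`-update: with
`M̃ = M − λ·I ⪯ 0`, `L(G) = (ρ/2)Tr(GᵀMG) + Tr(CᵀG)` and `Q = C + ρ M̃ G'`,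
if `Tr(G″ᵀG″) = Tr(G′ᵀG′)` and `Tr(QᵀG″) ≤ Tr(QᵀG′)` then `L(G″) ≤ L(G′)`. -/
theorem mm_descent {N : ℕ} (hN : 0 < N) (ρ : ℝ) (hρ : 0 < ρ)
    (M : Matrix (Fin N) (Fin N) ℝ) (hM : M.IsSymm) (lam : ℝ)
    (hNeg : (-(M - lam • (1 : Matrix (Fin N) (Fin N) ℝ))).PosSemidef)
    (C : Matrix (Fin N) (Fin 2) ℝ)
    (G' G'' : Matrix (Fin N) (Fin 2) ℝ)
    (hnorm : (G''ᵀ * G'').trace = (G'ᵀ * G').trace)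
    (hlin : (((C + ρ • ((M - lam • (1 : Matrix (Fin N) (Fin N) ℝ)) * G'))ᵀ)
        * G'').trace ≤
      (((C + ρ • ((M - lam • (1 : Matrix (Fin N) (Fin N) ℝ)) * G'))ᵀ)
        * G').trace) :
    ρ / 2 * (G''ᵀ * M * G'').trace + (Cᵀ * G'').trace ≤
      ρ / 2 * (G'ᵀ * M * G').trace + (Cᵀ * G').trace :=
  mm_descent_general ρ hρ M lam hNeg C G' G'' hnorm hlin
end
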